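/- Let G be a connected symmetric directed graph (i.e., (i,j) ∈ A(G) iff (j,i) ∈ A(G)). If the underlying undirected graph of G contains an even cycle, then P_G is not simplicial. -/

import Mathlib

open Finset

/-- `ρ(e) = e_{i} - e_{j}` for an arrow `e = (i,j)`. -/
def rho {V : Type*} [DecidableEq V] (e : V × V) : V → ℝ :=
  fun k => (if k = e.1 then (1 : ℝ) else 0) - (if k = e.2 then (1 : ℝ) else 0)

/-- The polytope `P_G` associated with the arrow set `A` of a directed graph. -/
def polyG {V : Type*} [DecidableEq V] (A : Finset (V × V)) : Set (V → ℝ) :=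
  convexHull ℝ (rho '' (A : Set (V × V)))

/-- Connectivity of the underlying undirected graph of the directed graph with arrow set `A`. -/
def GConnected {V : Type*} [DecidableEq V] (A : Finset (V × V)) : Prop :=
  (SimpleGraph.fromRel (fun i j => (i, j) ∈ A)).Connected

/-- Cyclic successor on `Fin l`. -/
def succAt {l : ℕ} (h : 0 < l) (j : Fin l) : Fin l :=
  ⟨((j : ℕ) + 1) % l, Nat.mod_lt _ h⟩

/-- The data of a cycle in a directed graph on the vertex set `V`:
a list of at least two distinct vertices, cyclically ordered, together with, for each
edge of the cycle, a choice of direction (`ε j = true` means the arrow points forwards). -/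
structure PreCycle (V : Type*) where
  l : ℕ
  two_le : 2 ≤ l
  v : Fin l → V
  ε : Fin l → Bool
  inj : Function.Injective v

namespace PreCycle

variable {V : Type*}

theorem pos (C : PreCycle V) : 0 < C.l :=
  lt_of_lt_of_le Nat.zero_lt_two C.two_le

/-- The cyclically next index. -/
def nxt (C : PreCycle V) (j : Fin C.l) : Fin C.l := succAt C.pos j

/-- The arrow of the cycle corresponding to its `j`-th edge. -/
def arrow (C : PreCycle V) (j : Fin C.l) : V × V :=
  if C.ε j then (C.v j, C.v (C.nxt j)) else (C.v (C.nxt j), C.v j)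

/-- `C` is a cycle in the directed graph with arrow set `A`. -/
def IsCycleIn [DecidableEq V] (C : PreCycle V) (A : Finset (V × V)) : Prop :=
  (∀ j, C.arrow j ∈ A) ∧ Function.Injective C.arrow

/-- A cycle is homogeneous if it has as many forward arrows as backward arrows. -/
def Homogeneous (C : PreCycle V) : Prop :=
  2 * (Finset.univ.filter fun j => C.ε j = true).card = C.l

/-- A directed cycle: all arrows point in the direction of traversal. -/
def IsDirected (C : PreCycle V) : Prop := ∀ j, C.ε j = true

/-- The defining property of the function `μ_C` attached to a homogeneous cycle `C`
(here recorded as a function of the position along the cycle; since the vertices of the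
cycle are distinct this is the same as a function on the cycle vertices):
it is nonnegative, decreases by `1` along forward arrows, increases by `1` along
backward arrows, and has minimum value `0`. -/
def IsMu (C : PreCycle V) (μ : Fin C.l → ℤ) : Prop :=
  (∀ j, 0 ≤ μ j) ∧ (∀ j, μ (C.nxt j) = if C.ε j then μ j - 1 else μ j + 1) ∧ (∃ j, μ j = 0)

end PreCycle

/-- Every arrow of the directed graph with arrow set `A` lies in a directed cycle. -/
def EveryArrowInDirCycle {V : Type*} [DecidableEq V] (A : Finset (V × V)) : Prop :=
  ∀ e ∈ A, ∃ C : PreCycle V, C.IsCycleIn A ∧ C.IsDirected ∧ ∃ j, C.arrow j = e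

/-- The dimension of a subset of `ℝ^V` (the dimension of its affine hull). -/
noncomputable def pdim {V : Type*} (s : Set (V → ℝ)) : ℕ :=
  Module.finrank ℝ (vectorSpan ℝ s)

/-- `F` is a facet of the polytope `P`: a nonempty exposed face of codimension one. -/
def IsFacetOf {V : Type*} (F P : Set (V → ℝ)) : Prop :=
  IsExposed ℝ P F ∧ F.Nonempty ∧ pdim F + 1 = pdim P

/-- A polytope is simplicial if the vertices of every facet are affinely independent. -/
def Simplicial {V : Type*} (P : Set (V → ℝ)) : Prop :=
  ∀ F : Set (V → ℝ), IsFacetOf F P →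
    AffineIndependent ℝ (fun x : (F.extremePoints ℝ) => (x : V → ℝ))

/-- The lattice `ℤ^V ∩ {x : Σ x_i = 0}`, as a subset of `ℝ^V`. -/
def latticeSet (V : Type*) [Fintype V] : Set (V → ℝ) :=
  {x | (∀ i, ∃ z : ℤ, x i = (z : ℝ)) ∧ ∑ i, x i = 0}

/-- The set of integer points of `ℝ^V`. -/
def intLat (V : Type*) : Set (V → ℝ) :=
  {x | ∀ i, ∃ z : ℤ, x i = (z : ℝ)}

/-- `W` is a `ℤ`-basis of (the additive group generated by) `L`. -/
def IsZBasisOf {V : Type*} (W L : Set (V → ℝ)) : Prop :=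
  W ⊆ L ∧ LinearIndependent ℤ (fun x : W => (x : V → ℝ)) ∧
    L ⊆ (Submodule.span ℤ W : Set (V → ℝ))

/-- There is a directed path of length `n` from `i` to `j` in the directed graph `A`. -/
def HasDPath {V : Type*} (A : Finset (V × V)) (i j : V) (n : ℕ) : Prop :=
  ∃ f : Fin (n + 1) → V, f 0 = i ∧ f (Fin.last n) = j ∧
    ∀ k : Fin n, (f k.castSucc, f k.succ) ∈ A

/-- The underlying undirected graph of `A` contains an even cycle. -/
def HasEvenCycle {V : Type*} [DecidableEq V] (A : Finset (V × V)) : Prop :=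
  ∃ C : PreCycle V, 3 ≤ C.l ∧ Even C.l ∧
    ∀ j, (C.v j, C.v (C.nxt j)) ∈ A ∨ (C.v (C.nxt j), C.v j) ∈ A

/-! Colour the vertices by `χ : V → Bool` and call an arrow tight if it goes from colour `true`
to colour `false`. The functional `x ↦ ∑_{χ i} x i` is at most `1` on `P_G` and equals `1`
exactly at the tight arrows, so these span an exposed face. If the edges with differently
coloured ends connect `G`, the tight arrows linearly span everything `A` does, which by symmetry
of `A` is the direction of `P_G` itself; hence the face is a facet. Such a colouring can be chosen
alternating along the even cycle: recolour vertices just outside the bichromatic component of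
the cycle until it is everything. The cycle edges, oriented from `true` to `false`, are then
vertices of the facet whose signed sum telescopes to `0`, an affine dependence. -/

section ConvexGeometry

variable {E : Type*} [AddCommGroup E] [Module ℝ E]

theorem Finset.convexHull_filter_eq (s : Finset E) (l : E →ₗ[ℝ] ℝ) {r : ℝ}
    (hle : ∀ x ∈ s, l x ≤ r) :
    convexHull ℝ ↑(s.filter (l · = r)) = {x ∈ convexHull ℝ ↑s | l x = r} := by
  apply Set.Subset.antisymm
  · refine convexHull_min (fun x hx => ?_) ((convex_convexHull ℝ _).inter
      (convex_hyperplane l.isLinear r))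
    rw [Finset.coe_filter] at hx
    exact ⟨subset_convexHull ℝ _ hx.1, hx.2⟩
  · rintro x ⟨hx, hlx⟩
    obtain ⟨w, hw₀, hw₁, rfl⟩ := Finset.mem_convexHull'.1 hx
    -- the slacks `r - l y` are nonnegative and their `w`-average vanishes
    have hslack : ∀ y ∈ s, w y * (r - l y) = 0 := by
      refine (Finset.sum_eq_zero_iff_of_nonneg fun y hy =>
        mul_nonneg (hw₀ y hy) (sub_nonneg.2 (hle y hy))).1 ?_
      calc ∑ y ∈ s, w y * (r - l y) = r * ∑ y ∈ s, w y - l (∑ y ∈ s, w y • y) := by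
            simp [mul_sub, Finset.sum_sub_distrib, Finset.mul_sum, mul_comm]
        _ = 0 := by rw [hw₁, hlx, mul_one, sub_self]
    have hsupp : ∀ y ∈ s, w y ≠ 0 → l y = r := fun y hy hw =>
      (sub_eq_zero.1 ((mul_eq_zero.1 (hslack y hy)).resolve_left hw)).symm
    refine Finset.mem_convexHull'.2 ⟨w, fun y hy => hw₀ y (Finset.mem_filter.1 hy).1, ?_, ?_⟩
    · rwa [Finset.sum_filter_of_ne hsupp]
    · exact Finset.sum_filter_of_ne fun y hy h => hsupp y hy (left_ne_zero_of_smul h)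

theorem vectorSpan_convexHull (s : Set E) : vectorSpan ℝ (convexHull ℝ s) = vectorSpan ℝ s := by
  rw [← direction_affineSpan, affineSpan_convexHull, direction_affineSpan]

variable [TopologicalSpace E]

theorem isExposed_setOf_eq_of_le {P : Set E} (l : StrongDual ℝ E) {r : ℝ}
    (hle : ∀ x ∈ P, l x ≤ r) (hr : ∃ x ∈ P, l x = r) :
    IsExposed ℝ P {x ∈ P | l x = r} := by
  obtain ⟨x₀, hx₀, hlx₀⟩ := hr
  refine fun _ => ⟨l, Set.ext fun x => and_congr_right fun hx => ⟨?_, ?_⟩⟩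
  · intro hlx y hy
    exact hlx ▸ hle y hy
  · intro hmax
    exact le_antisymm (hle x hx) (hlx₀ ▸ hmax x₀ hx₀)

theorem Finset.mem_extremePoints_convexHull_of_filter_eq (s : Finset E) (l : StrongDual ℝ E)
    {r : ℝ} {x : E} (hle : ∀ y ∈ s, l y ≤ r) (hx : s.filter (l · = r) = {x}) :
    x ∈ (convexHull ℝ (s : Set E)).extremePoints ℝ := by
  have hface := s.convexHull_filter_eq (l : E →ₗ[ℝ] ℝ) hle
  simp only [hx, Finset.coe_singleton, convexHull_singleton, ContinuousLinearMap.coe_coe] at hface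
  have hxs : x ∈ s.filter (l · = r) := hx ▸ Finset.mem_singleton_self x
  rw [Finset.mem_filter] at hxs
  refine exposedPoints_subset_extremePoints (mem_exposedPoints_iff_exposed_singleton.2 ?_)
  rw [hface]
  refine isExposed_setOf_eq_of_le l (fun y hy => ?_) ⟨x, subset_convexHull ℝ _ hxs.1, hxs.2⟩
  exact convexHull_min hle (convex_halfSpace_le l.isLinear r) hy

end ConvexGeometry

section Span

variable {E : Type*} [AddCommGroup E] [Module ℝ E]

theorem vectorSpan_le_span (s : Set E) : vectorSpan ℝ s ≤ Submodule.span ℝ s := by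
  rw [vectorSpan_def, Submodule.span_le]
  rintro _ ⟨x, hx, y, hy, rfl⟩
  exact Submodule.sub_mem _ (Submodule.subset_span hx) (Submodule.subset_span hy)

theorem vectorSpan_eq_span_of_neg_mem {s : Set E} (hs : ∀ x ∈ s, -x ∈ s) :
    vectorSpan ℝ s = Submodule.span ℝ s := by
  refine le_antisymm (vectorSpan_le_span s) (Submodule.span_le.2 fun x hx => ?_)
  have h := Submodule.smul_mem _ (2⁻¹ : ℝ) (vsub_mem_vectorSpan ℝ hx (hs x hx))
  rwa [vsub_eq_sub, sub_neg_eq_add, ← two_smul ℝ, smul_smul, inv_mul_cancel₀ two_ne_zero,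
    one_smul] at h

theorem finrank_vectorSpan_add_one [FiniteDimensional ℝ E] {s : Set E} {x : E} (hx : x ∈ s)
    (l : E →ₗ[ℝ] ℝ) (hl : ∀ y ∈ s, l y = 1) :
    Module.finrank ℝ (vectorSpan ℝ s) + 1 = Module.finrank ℝ (Submodule.span ℝ s) := by
  have hker : vectorSpan ℝ s ≤ LinearMap.ker l := by
    rw [vectorSpan_def, Submodule.span_le]
    rintro _ ⟨y, hy, z, hz, rfl⟩
    simp [hl y hy, hl z hz]
  have hsup : vectorSpan ℝ s ⊔ ℝ ∙ x = Submodule.span ℝ s := by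
    refine le_antisymm (sup_le (vectorSpan_le_span s) ?_) (Submodule.span_le.2 fun y hy => ?_)
    · exact Submodule.span_mono (Set.singleton_subset_iff.2 hx)
    · rw [← sub_add_cancel y x]
      exact Submodule.add_mem_sup (vsub_mem_vectorSpan ℝ hy hx)
        (Submodule.mem_span_singleton_self x)
  have hinf : vectorSpan ℝ s ⊓ ℝ ∙ x = ⊥ := by
    refine (Submodule.eq_bot_iff _).2 fun z hz => ?_
    obtain ⟨hzs, c, rfl⟩ := And.imp_right Submodule.mem_span_singleton.1 (Submodule.mem_inf.1 hz)
    have h0 : l (c • x) = 0 := hker hzs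
    rw [map_smul, hl x hx, smul_eq_mul, mul_one] at h0
    rw [h0, zero_smul]
  have hx0 : x ≠ 0 := fun h => by simpa [h] using hl x hx
  have h := Submodule.finrank_sup_add_finrank_inf_eq (vectorSpan ℝ s) (ℝ ∙ x)
  rwa [hsup, hinf, finrank_bot, add_zero, finrank_span_singleton hx0, eq_comm] at h

end Span

namespace SimpleGraph

variable {V : Type*} (G : SimpleGraph V)

/-- The edges of `G` whose ends get different colours. -/
def bichromatic (χ : V → Bool) : SimpleGraph V := G ⊓ (⊤ : SimpleGraph Bool).comap χ

variable {G}

@[simp]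
theorem bichromatic_adj {χ : V → Bool} {u v : V} :
    (G.bichromatic χ).Adj u v ↔ G.Adj u v ∧ χ u ≠ χ v := by
  simp [bichromatic]

theorem Reachable.bichromatic_update [DecidableEq V] {χ : V → Bool} {w y u : V}
    (hy : ¬ (G.bichromatic χ).Reachable w y) (b : Bool) (hu : (G.bichromatic χ).Reachable w u) :
    (G.bichromatic (Function.update χ y b)).Reachable w u := by
  rw [reachable_iff_reflTransGen] at hu ⊢
  induction hu with
  | refl => rfl
  | @tail a c hwa hac ih =>
    have ha : a ≠ y := by rintro rfl; exact hy ((reachable_iff_reflTransGen _ _).2 hwa)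
    have hc : c ≠ y := by
      rintro rfl; exact hy ((reachable_iff_reflTransGen _ _).2 (hwa.tail hac))
    rw [bichromatic_adj] at hac
    refine ih.tail ?_
    rw [bichromatic_adj, Function.update_of_ne ha, Function.update_of_ne hc]
    exact hac

/-- Take a colouring maximising the bichromatic component of `w`; if that component is not
everything, give a vertex just outside it the colour opposite to its neighbour inside. -/
theorem Connected.exists_bichromatic_connected [Finite V] [DecidableEq V] (hG : G.Connected) (w : V)
    {P : (V → Bool) → Prop} (hP : ∃ χ, P χ)
    (hupdate : ∀ χ y b, P χ → ¬ (G.bichromatic χ).Reachable w y → P (Function.update χ y b)) :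
    ∃ χ, P χ ∧ (G.bichromatic χ).Connected := by
  have : Nonempty {χ // P χ} := hP.elim fun χ hχ => ⟨⟨χ, hχ⟩⟩
  obtain ⟨⟨χ, hχ⟩, hmax⟩ :=
    Finite.exists_max fun χ : {χ // P χ} => {u | (G.bichromatic χ.1).Reachable w u}.ncard
  refine ⟨χ, hχ, (connected_iff_exists_forall_reachable _).2 ⟨w, ?_⟩⟩
  by_contra! ⟨u, hu⟩
  obtain ⟨p⟩ := hG.preconnected w u
  obtain ⟨d, -, hx, hy⟩ :=
    p.exists_boundary_dart {u | (G.bichromatic χ).Reachable w u} (Reachable.refl w) hu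
  set χ' := Function.update χ d.snd (!χ d.fst)
  have hgrow : {u | (G.bichromatic χ).Reachable w u} ⊂ {u | (G.bichromatic χ').Reachable w u} := by
    refine (Set.ssubset_iff_of_subset fun v hv => hv.bichromatic_update hy _).2 ⟨d.snd, ?_, hy⟩
    have hne : d.fst ≠ d.snd := d.adj.ne
    refine (hx.bichromatic_update hy _).trans (Adj.reachable ?_)
    simp [hne, d.adj]
  exact (Set.ncard_lt_ncard hgrow).not_ge (hmax ⟨χ', hupdate χ _ _ hχ hy⟩)

theorem Reachable.sub_mem {R E : Type*} [Ring R] [AddCommGroup E] [Module R E]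
    {M : Submodule R E} {f : V → E}
    (hadj : ∀ u v, G.Adj u v → f u - f v ∈ M) {u v : V} (h : G.Reachable u v) :
    f u - f v ∈ M := by
  obtain ⟨p⟩ := h
  induction p with
  | nil => simp
  | cons huw _ ih => simpa using M.add_mem (hadj _ _ huw) ih

end SimpleGraph

section Rho

variable {V : Type*} [DecidableEq V]

theorem rho_eq_single_sub_single (e : V × V) : rho e = Pi.single e.1 1 - Pi.single e.2 1 := by
  ext k
  simp [rho, Pi.single_apply]

theorem rho_swap (e : V × V) : rho e.swap = -rho e := by
  ext k
  simp only [rho, Prod.fst_swap, Prod.snd_swap, Pi.neg_apply]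
  ring

theorem rho_apply_sub_apply_le_two (e : V × V) (a b : V) : rho e a - rho e b ≤ 2 := by
  simp only [rho]
  split_ifs <;> norm_num

theorem rho_apply_sub_apply_eq_two_iff {a b : V} (hab : a ≠ b) (e : V × V) :
    rho e a - rho e b = 2 ↔ e = (a, b) := by
  obtain ⟨e₁, e₂⟩ := e
  simp only [rho, Prod.mk.injEq]
  split_ifs <;> subst_vars <;> norm_num <;> tauto

theorem rho_injOn : Set.InjOn (rho (V := V)) {e | e.1 ≠ e.2} := fun e he e' _ h =>
  ((rho_apply_sub_apply_eq_two_iff he e').1 (by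
    rw [← h, rho_apply_sub_apply_eq_two_iff he])).symm

end Rho

section Cut

variable {V : Type*}

def underlyingGraph (A : Finset (V × V)) : SimpleGraph V :=
  SimpleGraph.fromRel fun i j => (i, j) ∈ A

def tightArrows (A : Finset (V × V)) (χ : V → Bool) : Finset (V × V) :=
  A.filter fun e => χ e.1 = true ∧ χ e.2 = false

def cutFace [DecidableEq V] (A : Finset (V × V)) (χ : V → Bool) : Set (V → ℝ) :=
  convexHull ℝ (rho '' (tightArrows A χ : Set (V × V)))

def cutFunctional [Fintype V] (χ : V → Bool) : StrongDual ℝ (V → ℝ) :=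
  ∑ i with χ i = true, ContinuousLinearMap.proj i

variable {A : Finset (V × V)} {χ : V → Bool}

theorem fst_ne_snd_of_mem_tightArrows {e : V × V} (he : e ∈ tightArrows A χ) : e.1 ≠ e.2 :=
  fun h => by simp_all [tightArrows]

/-- `rho e` is the only `rho e'` on which `x ↦ x e.1 - x e.2` reaches its maximum `2`. -/
theorem rho_mem_extremePoints_cutFace [DecidableEq V] {e : V × V} (he : e ∈ tightArrows A χ) :
    rho e ∈ (cutFace A χ).extremePoints ℝ := by
  classical
  have hne := fst_ne_snd_of_mem_tightArrows he
  set ψ : StrongDual ℝ (V → ℝ) :=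
    ContinuousLinearMap.proj (R := ℝ) (φ := fun _ : V => ℝ) e.1 - ContinuousLinearMap.proj e.2
  have hψ : ∀ e', ψ (rho e') = rho e' e.1 - rho e' e.2 := fun _ => rfl
  have h := ((tightArrows A χ).image rho).mem_extremePoints_convexHull_of_filter_eq ψ
    (r := 2) (x := rho e)
    (Finset.forall_mem_image.2 fun e' _ => hψ e' ▸ rho_apply_sub_apply_le_two e' e.1 e.2) ?_
  · rwa [Finset.coe_image] at h
  · simp only [Finset.filter_image, hψ, rho_apply_sub_apply_eq_two_iff hne]
    rw [Finset.filter_eq', if_pos he, Finset.image_singleton]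

/-- By symmetry of `A`, each bichromatic edge is a tight arrow in one of its two orientations,
so `e_u - e_v` stays in the span of the tight arrows along bichromatic paths. -/
theorem rho_mem_span_tightArrows [DecidableEq V] (hsym : ∀ i j : V, (i, j) ∈ A → (j, i) ∈ A)
    (hχ : ((underlyingGraph A).bichromatic χ).Connected) (e : V × V) :
    rho e ∈ Submodule.span ℝ (rho '' (tightArrows A χ : Set (V × V))) := by
  have hmem : ∀ e ∈ tightArrows A χ, rho e ∈ Submodule.span ℝ (rho '' (tightArrows A χ : Set _)) :=
    fun e he => Submodule.subset_span ⟨e, he, rfl⟩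
  rw [rho_eq_single_sub_single]
  refine (hχ.preconnected e.1 e.2).sub_mem (f := fun v => Pi.single v (1 : ℝ)) fun u v huv => ?_
  simp only [SimpleGraph.bichromatic_adj, underlyingGraph, SimpleGraph.fromRel_adj] at huv
  obtain ⟨⟨-, huvA⟩, hne⟩ := huv
  have huvA : (u, v) ∈ A := huvA.elim id (hsym v u)
  rw [← rho_eq_single_sub_single (u, v)]
  cases hu : χ u
  · rw [show (u, v) = (v, u).swap from rfl, rho_swap]
    exact neg_mem (hmem (v, u) (by simp_all [tightArrows, hsym u v huvA]))
  · exact hmem (u, v) (by simp_all [tightArrows])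

variable [Fintype V] [DecidableEq V]

theorem cutFunctional_rho (e : V × V) :
    cutFunctional χ (rho e) = (if χ e.1 then 1 else 0) - (if χ e.2 then 1 else 0) := by
  simp [cutFunctional, rho, Finset.sum_sub_distrib, Finset.sum_ite_eq']

theorem cutFunctional_rho_le_one (e : V × V) : cutFunctional χ (rho e) ≤ 1 := by
  rw [cutFunctional_rho]
  split_ifs <;> norm_num

theorem cutFunctional_rho_eq_one_iff (e : V × V) :
    cutFunctional χ (rho e) = 1 ↔ χ e.1 = true ∧ χ e.2 = false := by
  rw [cutFunctional_rho]
  cases χ e.1 <;> cases χ e.2 <;> norm_num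

theorem cutFace_eq : cutFace A χ = {x ∈ polyG A | cutFunctional χ x = 1} := by
  have h := (A.image (rho (V := V))).convexHull_filter_eq (cutFunctional χ : (V → ℝ) →ₗ[ℝ] ℝ)
    (r := 1) (Finset.forall_mem_image.2 fun e _ => cutFunctional_rho_le_one e)
  simp only [ContinuousLinearMap.coe_coe, Finset.filter_image, cutFunctional_rho_eq_one_iff,
    Finset.coe_image] at h
  exact h

theorem isExposed_cutFace {e : V × V} (he : e ∈ tightArrows A χ) :
    IsExposed ℝ (polyG A) (cutFace A χ) := by
  rw [cutFace_eq]
  refine isExposed_setOf_eq_of_le _ (fun x hx => ?_) ⟨rho e, ?_, ?_⟩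
  · exact convexHull_min (Set.forall_mem_image.2 fun e _ => cutFunctional_rho_le_one e)
      (convex_halfSpace_le (cutFunctional χ : (V → ℝ) →ₗ[ℝ] ℝ).isLinear 1) hx
  · exact subset_convexHull ℝ _ ⟨e, (Finset.mem_filter.1 he).1, rfl⟩
  · exact (cutFunctional_rho_eq_one_iff e).2 (Finset.mem_filter.1 he).2

theorem pdim_cutFace_add_one (hsym : ∀ i j : V, (i, j) ∈ A → (j, i) ∈ A)
    (hχ : ((underlyingGraph A).bichromatic χ).Connected) {e : V × V}
    (he : e ∈ tightArrows A χ) : pdim (cutFace A χ) + 1 = pdim (polyG A) := by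
  have hspan : Submodule.span ℝ (rho '' (tightArrows A χ : Set (V × V))) =
      Submodule.span ℝ (rho '' (A : Set (V × V))) := by
    refine le_antisymm (Submodule.span_mono (Set.image_mono ?_)) (Submodule.span_le.2 ?_)
    · exact Finset.coe_subset.2 (Finset.filter_subset _ _)
    · rintro _ ⟨e, -, rfl⟩
      exact rho_mem_span_tightArrows hsym hχ e
  have hneg : ∀ x ∈ rho '' (A : Set (V × V)), -x ∈ rho '' (A : Set (V × V)) := by
    rintro _ ⟨e, he, rfl⟩
    exact ⟨e.swap, hsym _ _ he, rho_swap e⟩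
  unfold pdim cutFace polyG
  rw [vectorSpan_convexHull, vectorSpan_convexHull, vectorSpan_eq_span_of_neg_mem hneg, ← hspan]
  refine finrank_vectorSpan_add_one ⟨e, he, rfl⟩ (cutFunctional χ : (V → ℝ) →ₗ[ℝ] ℝ) ?_
  rintro _ ⟨e, he, rfl⟩
  exact (cutFunctional_rho_eq_one_iff e).2 (Finset.mem_filter.1 he).2

theorem isFacetOf_cutFace (hsym : ∀ i j : V, (i, j) ∈ A → (j, i) ∈ A)
    (hχ : ((underlyingGraph A).bichromatic χ).Connected) {e : V × V}
    (he : e ∈ tightArrows A χ) : IsFacetOf (cutFace A χ) (polyG A) :=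
  ⟨isExposed_cutFace he, ⟨rho e, subset_convexHull ℝ _ ⟨e, he, rfl⟩⟩,
    pdim_cutFace_add_one hsym hχ he⟩

end Cut

namespace PreCycle

variable {V : Type*} (C : PreCycle V)

instance : NeZero C.l := ⟨C.pos.ne'⟩

theorem nxt_eq_add_one (j : Fin C.l) : C.nxt j = j + 1 := by
  ext
  simp [nxt, succAt, Fin.val_add, Nat.mod_eq_of_lt (show 1 < C.l from C.two_le)]

theorem nxt_ne_self (j : Fin C.l) : C.nxt j ≠ j := by
  rw [nxt_eq_add_one, Ne, add_eq_left, Fin.ext_iff]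
  simp [Nat.mod_eq_of_lt (show 1 < C.l from C.two_le)]

theorem nxt_nxt_ne_self (hl : 3 ≤ C.l) (j : Fin C.l) : C.nxt (C.nxt j) ≠ j := by
  rw [nxt_eq_add_one, nxt_eq_add_one, add_assoc, Ne, add_eq_left, Fin.ext_iff]
  simp [Fin.val_add, Nat.mod_eq_of_lt (show 1 < C.l by omega),
    Nat.mod_eq_of_lt (show 2 < C.l by omega)]

theorem sum_comp_nxt {M : Type*} [AddCommMonoid M] (f : Fin C.l → M) :
    ∑ j, f (C.nxt j) = ∑ j, f j := by
  simp only [nxt_eq_add_one]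
  exact Fintype.sum_equiv (Equiv.addRight 1) _ _ fun _ => rfl

def IsAlternating (χ : V → Bool) : Prop := ∀ j, χ (C.v (C.nxt j)) = !χ (C.v j)

theorem even_val_nxt_iff (h : Even C.l) (j : Fin C.l) : Even (C.nxt j : ℕ) ↔ ¬ Even (j : ℕ) := by
  change Even (((j : ℕ) + 1) % C.l) ↔ _
  rcases (Nat.succ_le_of_lt j.isLt).lt_or_eq with hj | hj
  · rw [Nat.mod_eq_of_lt hj, Nat.even_add_one]
  · have hj' : (j : ℕ) + 1 = C.l := hj
    rw [hj', Nat.mod_self]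
    rw [← hj', Nat.even_add_one] at h
    simp [h]

theorem exists_isAlternating (h : Even C.l) : ∃ χ, C.IsAlternating χ := by
  refine ⟨Function.extend C.v (fun j => decide (Even (j : ℕ))) (fun _ => false), fun j => ?_⟩
  rw [C.inj.extend_apply, C.inj.extend_apply]
  simp [C.even_val_nxt_iff h, -Nat.not_even_iff_odd]

variable {C}

theorem IsAlternating.reachable {G : SimpleGraph V} {χ : V → Bool} (hχ : C.IsAlternating χ)
    (hadj : ∀ j, G.Adj (C.v j) (C.v (C.nxt j))) (j : Fin C.l) :
    (G.bichromatic χ).Reachable (C.v 0) (C.v j) := by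
  obtain ⟨m, hm⟩ := j
  induction m with
  | zero => rfl
  | succ m ih =>
    have hnxt : C.nxt ⟨m, by omega⟩ = ⟨m + 1, hm⟩ := Fin.ext (Nat.mod_eq_of_lt hm)
    rw [← hnxt]
    refine (ih (by omega)).trans (SimpleGraph.Adj.reachable ?_)
    simp [hadj, hχ _]

theorem exists_isAlternating_bichromatic_connected [Finite V] [DecidableEq V]
    {G : SimpleGraph V} (hG : G.Connected) (hadj : ∀ j, G.Adj (C.v j) (C.v (C.nxt j)))
    (heven : Even C.l) : ∃ χ, C.IsAlternating χ ∧ (G.bichromatic χ).Connected := by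
  refine hG.exists_bichromatic_connected (C.v 0) (C.exists_isAlternating heven)
    fun χ y b hχ hy j => ?_
  have hne : ∀ k, C.v k ≠ y := fun k hk => hy (hk ▸ hχ.reachable hadj k)
  rw [Function.update_of_ne (hne _), Function.update_of_ne (hne _)]
  exact hχ j

variable (C)

def cutArrow (χ : V → Bool) (j : Fin C.l) : V × V :=
  if χ (C.v j) then (C.v j, C.v (C.nxt j)) else (C.v (C.nxt j), C.v j)

theorem cutArrow_injective (hl : 3 ≤ C.l) (χ : V → Bool) : Function.Injective (C.cutArrow χ) := by
  intro j k h
  unfold cutArrow at h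
  split_ifs at h <;> simp only [Prod.mk.injEq] at h
  · exact C.inj h.1
  · have hj : j = C.nxt k := C.inj h.1
    exact absurd (hj ▸ C.inj h.2) (C.nxt_nxt_ne_self hl k)
  · have hk : k = C.nxt j := (C.inj h.1).symm
    exact absurd (hk ▸ C.inj h.2) (C.nxt_nxt_ne_self hl j).symm
  · exact C.inj h.2

/-- With these signs the `j`-th term is `e_{v j} - e_{v (j + 1)}`, which telescopes. -/
theorem sum_smul_rho_cutArrow [DecidableEq V] (χ : V → Bool) :
    ∑ j, (if χ (C.v j) then 1 else -1 : ℝ) • rho (C.cutArrow χ j) = 0 := by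
  have hterm : ∀ j, (if χ (C.v j) then 1 else -1 : ℝ) • rho (C.cutArrow χ j) =
      Pi.single (C.v j) 1 - Pi.single (C.v (C.nxt j)) 1 := by
    intro j
    unfold cutArrow
    split_ifs <;> simp [rho_eq_single_sub_single]
  rw [Finset.sum_congr rfl fun j _ => hterm j, Finset.sum_sub_distrib, sub_eq_zero]
  exact (C.sum_comp_nxt fun j => (Pi.single (C.v j) 1 : V → ℝ)).symm

variable {C}

theorem IsAlternating.sum_sign {χ : V → Bool} (hχ : C.IsAlternating χ) :
    ∑ j, (if χ (C.v j) then 1 else -1 : ℝ) = 0 := by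
  have h := C.sum_comp_nxt fun j => if χ (C.v j) then (1 : ℝ) else -1
  have hneg : ∀ j, (if χ (C.v (C.nxt j)) then (1 : ℝ) else -1) = -if χ (C.v j) then 1 else -1 := by
    intro j
    rw [hχ j]
    cases χ (C.v j) <;> norm_num
  rw [Finset.sum_congr rfl fun j _ => hneg j, Finset.sum_neg_distrib] at h
  linarith

theorem IsAlternating.not_affineIndependent_rho_cutArrow [DecidableEq V] {χ : V → Bool}
    (hχ : C.IsAlternating χ) : ¬ AffineIndependent ℝ fun j => rho (C.cutArrow χ j) := fun h => by
  have h0 := h.eq_zero_of_sum_eq_zero hχ.sum_sign (C.sum_smul_rho_cutArrow χ) 0 (Finset.mem_univ _)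
  split_ifs at h0 <;> norm_num at h0

theorem IsAlternating.cutArrow_mem_tightArrows {A : Finset (V × V)} {χ : V → Bool}
    (hsym : ∀ i j : V, (i, j) ∈ A → (j, i) ∈ A)
    (hA : ∀ j, (C.v j, C.v (C.nxt j)) ∈ A ∨ (C.v (C.nxt j), C.v j) ∈ A)
    (hχ : C.IsAlternating χ) (j : Fin C.l) : C.cutArrow χ j ∈ tightArrows A χ := by
  have h1 : (C.v j, C.v (C.nxt j)) ∈ A := (hA j).elim id (hsym _ _)
  have h2 := hsym _ _ h1
  have h3 := hχ j
  unfold cutArrow tightArrows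
  split_ifs <;> simp_all

end PreCycle

/-- for a connected symmetric directed graph whose underlying undirected
graph contains an even cycle, `P_G` is not simplicial. -/
theorem stmt11 {d : ℕ} (A : Finset (Fin d × Fin d)) (hconn : GConnected A)
    (hsym : ∀ i j : Fin d, (i, j) ∈ A → (j, i) ∈ A)
    (hec : HasEvenCycle A) :
    ¬ Simplicial (polyG A) := by
  intro hsimp
  obtain ⟨C, hl, heven, hA⟩ := hec
  have hadj : ∀ j, (underlyingGraph A).Adj (C.v j) (C.v (C.nxt j)) := fun j =>
    SimpleGraph.fromRel_adj _ _ _ |>.2 ⟨C.inj.ne (C.nxt_ne_self j).symm, hA j⟩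
  obtain ⟨χ, hχ, hχconn⟩ := C.exists_isAlternating_bichromatic_connected hconn hadj heven
  have htight := hχ.cutArrow_mem_tightArrows hsym hA
  have hfacet := isFacetOf_cutFace hsym hχconn (htight 0)
  let vertex : Fin C.l ↪ (cutFace A χ).extremePoints ℝ :=
    ⟨fun j => ⟨rho (C.cutArrow χ j), rho_mem_extremePoints_cutFace (htight j)⟩, fun j k h =>
      C.cutArrow_injective hl χ (rho_injOn (fst_ne_snd_of_mem_tightArrows (htight j))
        (fst_ne_snd_of_mem_tightArrows (htight k)) (congrArg Subtype.val h))⟩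
  exact hχ.not_affineIndependent_rho_cutArrow ((hsimp _ hfacet).comp_embedding vertex)
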